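/- arXiv:1505.04688 — 2 statements merged into one kernel-verified Lean document; each statement's English description precedes it below -/
import Mathlib

section
/- A λ-form is never equal to a π-form: if m, n, m', n' ≥ 0, i_1 < ⋯ < i_m, j_1 > ⋯ > j_n, k_1 < ⋯ < k_{m'}, h_1 > ⋯ > h_{n'} are integers and r > max(k_{m'}, h_1), then a†_{i_1}⋯a†_{i_m} a_{j_1}⋯a_{j_n} ≠ a†_{k_1}⋯a†_{k_{m'}} a_r a†_r a_{h_1}⋯a_{h_{n'}} as operators on F_m. -/
open scoped InnerProductSpace ComplexOrder
open ContinuousLinearMap Filter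

noncomputable section

/-- The monotone Fock space `F_m = ℓ²(Finset ℤ)`, the Hilbert space of square-summable
complex families indexed by the finite subsets of `ℤ`. -/
abbrev Fm : Type := lp (fun _ : Finset ℤ => ℂ) 2

/-- The canonical orthonormal basis vector `e_A`, for `A` a finite subset of `ℤ`;
`e ∅` is the vacuum vector `Ω`. -/
noncomputable def e (A : Finset ℤ) : Fm := lp.single 2 A 1

/-- `adag` is the family of monotone creation operators: `adag i` sends `e A` to
`e (A ∪ {i})` if `A = ∅` or `i < min A` (equivalently, `i < j` for all `j ∈ A`),
and to `0` otherwise. -/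
def CreatesOn (adag : ℤ → (Fm →L[ℂ] Fm)) : Prop :=
  ∀ (i : ℤ) (A : Finset ℤ),
    adag i (e A) = if ∀ j ∈ A, i < j then e (insert i A) else 0

/-- `a` is the family of monotone annihilation operators: `a i` sends `e A` to
`e (A \ {i})` if `A ≠ ∅` and `i = min A` (equivalently, `i ∈ A` and `i ≤ j` for all
`j ∈ A`), and to `0` otherwise. -/
def AnnihilatesOn (a : ℤ → (Fm →L[ℂ] Fm)) : Prop :=
  ∀ (i : ℤ) (A : Finset ℤ),
    a i (e A) = if i ∈ A ∧ ∀ j ∈ A, i ≤ j then e (A.erase i) else 0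

/-- A λ-form: an operator `X = a†_{i_1}⋯a†_{i_m} a_{j_1}⋯a_{j_n}` with
`i_1 < ⋯ < i_m` and `j_1 > ⋯ > j_n` (the identity `I` when `m = n = 0`). -/
def IsLambdaForm (a adag : ℤ → (Fm →L[ℂ] Fm)) (X : Fm →L[ℂ] Fm) : Prop :=
  ∃ is js : List ℤ, is.Chain' (· < ·) ∧ js.Chain' (· > ·) ∧
    X = (is.map adag).prod * (js.map a).prod

/-- A π-form: an operator `X = a†_{i_1}⋯a†_{i_m} a_k a†_k a_{j_1}⋯a_{j_n}` with
`i_1 < ⋯ < i_m`, `j_1 > ⋯ > j_n`, `k > i_m` and `k > j_1` (equivalently, `k` exceeds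
every index occurring in the increasing and decreasing strings). -/
def IsPiForm (a adag : ℤ → (Fm →L[ℂ] Fm)) (X : Fm →L[ℂ] Fm) : Prop :=
  ∃ (is js : List ℤ) (k : ℤ), is.Chain' (· < ·) ∧ js.Chain' (· > ·) ∧
    (∀ i ∈ is, i < k) ∧ (∀ j ∈ js, j < k) ∧
    X = (is.map adag).prod * (a k * adag k) * (js.map a).prod

/-! On basis vectors both kinds of operator act as partial maps of finite sets: the annihilation
string `a_{j_1}⋯a_{j_n}` sends `e_A` to `e_{A \ J}` exactly when `J` consists of the smallest
elements of `A`, the creation string then adds `I` below what is left, and `a_r a_r†` is the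
projection onto the `e_B` with every element of `B` above `r`.

Pick `s > r` outside `J`. The π-form maps `e_{H ∪ {s}}` to `e_{K ∪ {s}}` and kills `e_{H ∪ {r}}`.
A λ-form with the first property has `J ⊆ H` and `I ⊆ K`, both below `r`, so it maps
`e_{H ∪ {r}}` to a nonzero basis vector. -/

section

variable {a adag : ℤ → (Fm →L[ℂ] Fm)}

lemma e_ne_zero (A : Finset ℤ) : e A ≠ 0 :=
  norm_ne_zero_iff.1 (by simp [e, lp.norm_single])

lemma e_injective : Function.Injective e := by
  intro A B h
  by_contra hne
  have := congr_arg (fun x : Fm => x A) h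
  simp only [e, lp.single_apply_self, lp.single_apply_ne 2 B 1 hne] at this
  exact one_ne_zero this

lemma prod_map_adag_apply (hadag : CreatesOn adag) {is : List ℤ}
    (h : is.Pairwise (· < ·)) (B : Finset ℤ) :
    (is.map adag).prod (e B) =
      if ∀ i ∈ is, ∀ b ∈ B, i < b then e (is.toFinset ∪ B) else 0 := by
  induction is with
  | nil => simp
  | cons i is ih =>
    obtain ⟨hi, h⟩ := List.pairwise_cons.1 h
    have hlt : (∀ j ∈ is.toFinset ∪ B, i < j) ↔ ∀ b ∈ B, i < b := by
      simp only [Finset.forall_mem_union, List.mem_toFinset]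
      exact and_iff_right hi
    rw [List.map_cons, List.prod_cons, mul_apply_eq_comp, ih h]
    by_cases hB : ∀ i ∈ is, ∀ b ∈ B, i < b
    · rw [if_pos hB, hadag]
      refine if_congr ?_ (by simp [Finset.insert_union]) rfl
      rw [hlt, List.forall_mem_cons, and_iff_left hB]
    · simp [hB]

lemma prod_map_a_apply (ha : AnnihilatesOn a) {js : List ℤ}
    (h : js.Pairwise (· > ·)) (A : Finset ℤ) :
    (js.map a).prod (e A) =
      if js.toFinset ⊆ A ∧ ∀ j ∈ js, ∀ b ∈ A \ js.toFinset, j < b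
      then e (A \ js.toFinset) else 0 := by
  induction js with
  | nil => simp
  | cons j js ih =>
    obtain ⟨hj, h⟩ := List.pairwise_cons.1 h
    rw [List.map_cons, List.prod_cons, mul_apply_eq_comp, ih h]
    by_cases hA : js.toFinset ⊆ A ∧ ∀ j ∈ js, ∀ b ∈ A \ js.toFinset, j < b
    · rw [if_pos hA, ha, List.toFinset_cons, Finset.sdiff_insert]
      refine if_congr ?_ rfl rfl
      simp only [Finset.subset_iff, Finset.mem_sdiff, Finset.mem_erase, Finset.mem_insert,
        List.mem_toFinset, List.mem_cons] at hA ⊢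
      grind
    · rw [if_neg hA, map_zero, if_neg]
      simp only [Finset.subset_iff, Finset.mem_sdiff, Finset.mem_insert,
        List.mem_toFinset, List.toFinset_cons, List.mem_cons] at hA ⊢
      grind

lemma a_mul_adag_apply (ha : AnnihilatesOn a) (hadag : CreatesOn adag) (r : ℤ)
    (B : Finset ℤ) :
    (a r * adag r) (e B) = if ∀ b ∈ B, r < b then e B else 0 := by
  rw [mul_apply_eq_comp, hadag]
  split_ifs with hB
  · have hrB : r ∉ B := fun h => lt_irrefl r (hB r h)
    rw [ha, if_pos ⟨B.mem_insert_self r, by grind⟩, Finset.erase_insert hrB]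
  · exact map_zero _

lemma lambdaForm_apply (ha : AnnihilatesOn a) (hadag : CreatesOn adag) {is js : List ℤ}
    (hi : is.Pairwise (· < ·)) (hj : js.Pairwise (· > ·)) (A : Finset ℤ) :
    ((is.map adag).prod * (js.map a).prod) (e A) =
      if js.toFinset ⊆ A ∧ (∀ j ∈ js, ∀ b ∈ A \ js.toFinset, j < b) ∧
          ∀ i ∈ is, ∀ b ∈ A \ js.toFinset, i < b
      then e (is.toFinset ∪ A \ js.toFinset) else 0 := by
  rw [mul_apply_eq_comp, prod_map_a_apply ha hj]
  split_ifs with hA hI hI <;> simp_all [prod_map_adag_apply hadag hi]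

lemma piForm_apply (ha : AnnihilatesOn a) (hadag : CreatesOn adag) {ks hs : List ℤ} {r : ℤ}
    (hk : ks.Pairwise (· < ·)) (hh : hs.Pairwise (· > ·)) (hr : ∀ k ∈ ks, k < r)
    (A : Finset ℤ) :
    ((ks.map adag).prod * (a r * adag r) * (hs.map a).prod) (e A) =
      if hs.toFinset ⊆ A ∧ (∀ h ∈ hs, ∀ b ∈ A \ hs.toFinset, h < b) ∧
          ∀ b ∈ A \ hs.toFinset, r < b
      then e (ks.toFinset ∪ A \ hs.toFinset) else 0 := by
  rw [mul_apply_eq_comp, mul_apply_eq_comp, prod_map_a_apply ha hh]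
  by_cases hA : hs.toFinset ⊆ A ∧ ∀ h ∈ hs, ∀ b ∈ A \ hs.toFinset, h < b
  · rw [if_pos hA, a_mul_adag_apply ha hadag]
    by_cases hR : ∀ b ∈ A \ hs.toFinset, r < b
    · have hKR : ∀ k ∈ ks, ∀ b ∈ A \ hs.toFinset, k < b :=
        fun k hk b hb => (hr k hk).trans (hR b hb)
      rw [if_pos hR, prod_map_adag_apply hadag hk, if_pos hKR, if_pos ⟨hA.1, hA.2, hR⟩]
    · rw [if_neg hR, map_zero, if_neg (by tauto)]
  · rw [if_neg hA, map_zero, map_zero, if_neg (by tauto)]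

lemma piForm_apply_insert_of_lt (ha : AnnihilatesOn a) (hadag : CreatesOn adag)
    {ks hs : List ℤ} {r s : ℤ} (hk : ks.Pairwise (· < ·)) (hh : hs.Pairwise (· > ·))
    (hr : ∀ k ∈ ks, k < r) (hr' : ∀ h ∈ hs, h < r) (hrs : r < s) :
    ((ks.map adag).prod * (a r * adag r) * (hs.map a).prod) (e (insert s hs.toFinset)) =
      e (insert s ks.toFinset) := by
  have hsH : s ∉ hs.toFinset := fun h => (hr' s (List.mem_toFinset.1 h)).not_gt hrs
  rw [piForm_apply ha hadag hk hh hr, Finset.insert_sdiff_cancel hsH, if_pos]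
  · rw [Finset.union_singleton]
  · simpa [hrs] using fun h h' => (hr' h h').trans hrs

lemma piForm_apply_insert_self (ha : AnnihilatesOn a) (hadag : CreatesOn adag)
    {ks hs : List ℤ} {r : ℤ} (hh : hs.Pairwise (· > ·)) (hr' : ∀ h ∈ hs, h < r) :
    ((ks.map adag).prod * (a r * adag r) * (hs.map a).prod) (e (insert r hs.toFinset)) = 0 := by
  have hrH : r ∉ hs.toFinset := fun h => (hr' r (List.mem_toFinset.1 h)).false
  rw [mul_apply_eq_comp, mul_apply_eq_comp, prod_map_a_apply ha hh, if_pos,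
    Finset.insert_sdiff_cancel hrH, a_mul_adag_apply ha hadag, if_neg, map_zero]
  · simp
  · simpa [Finset.insert_sdiff_cancel hrH] using hr'

lemma lambdaForm_apply_insert_ne_zero (ha : AnnihilatesOn a) (hadag : CreatesOn adag)
    {is js ks hs : List ℤ} {r s : ℤ} (hi : is.Pairwise (· < ·)) (hj : js.Pairwise (· > ·))
    (hr : ∀ k ∈ ks, k < r) (hr' : ∀ h ∈ hs, h < r) (hsj : s ∉ js)
    (hval : ((is.map adag).prod * (js.map a).prod) (e (insert s hs.toFinset)) =
      e (insert s ks.toFinset)) :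
    ((is.map adag).prod * (js.map a).prod) (e (insert r hs.toFinset)) ≠ 0 := by
  rw [lambdaForm_apply ha hadag hi hj] at hval ⊢
  split_ifs at hval with hcond
  swap
  · exact absurd hval.symm (e_ne_zero _)
  obtain ⟨hJ, hJlt, hIlt⟩ := hcond
  have hJH : ∀ j ∈ js, j ∈ hs := fun j hj => by
    have hj_ne : j ≠ s := fun h => hsj (h ▸ hj)
    simpa [hj_ne] using hJ (List.mem_toFinset.2 hj)
  have hIr : ∀ i ∈ is, i < r := fun i hi => by
    have his : i < s := hIlt i hi s (by simp [hsj])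
    have hiK : i ∈ insert s ks.toFinset :=
      e_injective hval ▸ Finset.mem_union_left _ (List.mem_toFinset.2 hi)
    simp only [Finset.mem_insert, List.mem_toFinset] at hiK
    exact hiK.elim (fun h => absurd h his.ne) (hr i)
  have hsub : ∀ b ∈ insert r hs.toFinset \ js.toFinset,
      b = r ∨ b ∈ insert s hs.toFinset \ js.toFinset := by
    simp only [Finset.mem_sdiff, Finset.mem_insert]
    tauto
  rw [if_pos]
  · exact e_ne_zero _
  refine ⟨fun j hj => ?_, fun j hj b hb => ?_, fun i hi b hb => ?_⟩
  · exact Finset.mem_insert_of_mem (List.mem_toFinset.2 (hJH j (List.mem_toFinset.1 hj)))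
  · rcases hsub b hb with rfl | hb
    · exact hr' j (hJH j hj)
    · exact hJlt j hj b hb
  · rcases hsub b hb with rfl | hb
    · exact hIr i hi
    · exact hIlt i hi b hb

end

/-- Lemma 4.4 (iii): a λ-form is never equal to a π-form. -/
theorem lambdaForm_ne_piForm
    (a adag : ℤ → (Fm →L[ℂ] Fm))
    (ha : AnnihilatesOn a) (hadag : CreatesOn adag)
    (is js ks hs : List ℤ) (r : ℤ)
    (h1 : is.Chain' (· < ·)) (h2 : js.Chain' (· > ·))
    (h3 : ks.Chain' (· < ·)) (h4 : hs.Chain' (· > ·))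
    (hr : ∀ i ∈ ks, i < r) (hr' : ∀ j ∈ hs, j < r) :
    (is.map adag).prod * (js.map a).prod
      ≠ (ks.map adag).prod * (a r * adag r) * (hs.map a).prod := by
  have hi := List.isChain_iff_pairwise.1 h1
  have hj := List.isChain_iff_pairwise.1 h2
  have hk := List.isChain_iff_pairwise.1 h3
  have hh := List.isChain_iff_pairwise.1 h4
  obtain ⟨s, hrs, hsj⟩ : ∃ s, r < s ∧ s ∉ js :=
    ((Set.Ioi_infinite r).sdiff js.finite_toSet).nonempty
  intro heq
  refine lambdaForm_apply_insert_ne_zero ha hadag hi hj hr hr' hsj ?_ ?_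
  · rw [heq]
    exact piForm_apply_insert_of_lt ha hadag hk hh hr hr' hrs
  · rw [heq]
    exact piForm_apply_insert_self ha hadag hh hr'
end
end

section
/- The monotone C*-algebra decomposes as ℜ_m = 𝔄_m + ℂI: every element of ℜ_m can be written (uniquely) as X + cI with X ∈ 𝔄_m and c ∈ ℂ, and conversely every such sum belongs to ℜ_m. -/
/-!
Left multiplication by a generator `a_p` or `a†_p` sends a λ-form or π-form to another such form
or to `0`, because `a_k a†_k` is the projection onto the span of the `e_A` with `k < min A`. Hence
the forms span the unital *-algebra generated by the `a_i`, and its closure `ℜ_m` is the closure of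
`span (positive-length forms) + ℂI`, i.e. `𝔄_m + ℂI` (a closed subspace plus a finite-dimensional
one is closed). The sum is direct: every form of positive length kills `e_{{n}}` for all small
enough `n`, so every element of their span is at distance at least `1` from `I`, and `I ∉ 𝔄_m`.
-/

open scoped InnerProductSpace ComplexOrder
open ContinuousLinearMap Filter

noncomputable section

/-- Forms of positive length: λ-forms with `m + n > 0`, together with all π-forms
(which have length `m + n + 2 > 0`). -/
def IsPositiveLengthForm (a adag : ℤ → (Fm →L[ℂ] Fm)) (X : Fm →L[ℂ] Fm) : Prop :=
  (∃ is js : List ℤ, is.Chain' (· < ·) ∧ js.Chain' (· > ·) ∧ is ++ js ≠ [] ∧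
    X = (is.map adag).prod * (js.map a).prod) ∨ IsPiForm a adag X

/-- `𝔄_m`: the norm closure in `B(F_m)` of the linear span of all λ-forms and π-forms
of positive length. -/
def Am (a adag : ℤ → (Fm →L[ℂ] Fm)) : Set (Fm →L[ℂ] Fm) :=
  closure (Submodule.span ℂ
    {X : Fm →L[ℂ] Fm | IsPositiveLengthForm a adag X} : Set (Fm →L[ℂ] Fm))

/-- `ℜ_m`: the monotone C*-algebra, i.e. the norm closure of the unital *-subalgebra
of `B(F_m)` generated by the monotone annihilators `{a_i : i ∈ ℤ}`. -/
def Rm (a : ℤ → (Fm →L[ℂ] Fm)) : Set (Fm →L[ℂ] Fm) :=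
  closure (StarAlgebra.adjoin ℂ (Set.range a) : Set (Fm →L[ℂ] Fm))

lemma ext_e {F : Type*} [NormedAddCommGroup F] [NormedSpace ℂ F] {T S : Fm →L[ℂ] F}
    (h : ∀ A, T (e A) = S (e A)) : T = S :=
  lp.ext_continuousLinearMap ENNReal.ofNat_ne_top fun A => ContinuousLinearMap.ext_ring (h A)

lemma inner_e_left (A : Finset ℤ) (v : Fm) : ⟪e A, v⟫_ℂ = v A := by
  simp [e, lp.inner_single_left]

lemma inner_e_e (A B : Finset ℤ) : ⟪e A, e B⟫_ℂ = if A = B then 1 else 0 := by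
  rw [inner_e_left, e, lp.single_apply, Pi.single_apply]

lemma norm_e (A : Finset ℤ) : ‖e A‖ = 1 := by
  simp [e, lp.norm_single]

section Operators
variable {a adag : ℤ → (Fm →L[ℂ] Fm)} (ha : AnnihilatesOn a) (hadag : CreatesOn adag)

include ha hadag in
lemma star_a (p : ℤ) : star (a p) = adag p := by
  rw [star_eq_adjoint]
  refine ext_e fun B => lp.ext (funext fun A => ?_)
  rw [← inner_e_left, ← inner_e_left, adjoint_inner_right, ha, hadag]
  split_ifs with h1 h2 h2 <;> simp only [inner_e_e, inner_zero_left, inner_zero_right]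
  all_goals grind

include ha hadag in
lemma proj_apply (k : ℤ) (A : Finset ℤ) :
    (a k * adag k) (e A) = if ∀ j ∈ A, k < j then e A else 0 := by
  simp only [mul_apply_eq_comp, hadag _ _, apply_ite, ha _ _, map_zero]
  split_ifs <;> grind [Finset.mem_insert_self, Finset.erase_insert]

include hadag in
lemma adag_mul_adag_of_le {p q : ℤ} (h : q ≤ p) : adag p * adag q = 0 := by
  refine ext_e fun A => ?_
  simp only [mul_apply_eq_comp, hadag _ _, apply_ite, map_zero, zero_apply]
  split_ifs <;> grind [Finset.mem_insert_self]

include ha in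
lemma a_mul_a_of_le {p q : ℤ} (h : p ≤ q) : a p * a q = 0 := by
  refine ext_e fun A => ?_
  simp only [mul_apply_eq_comp, ha _ _, apply_ite, map_zero, zero_apply]
  split_ifs <;> grind

include ha hadag in
lemma a_mul_adag_of_ne {p q : ℤ} (h : p ≠ q) : a p * adag q = 0 := by
  refine ext_e fun A => ?_
  simp only [mul_apply_eq_comp, ha _ _, hadag _ _, apply_ite, map_zero, zero_apply]
  split_ifs <;> grind [Finset.mem_insert_self]

include ha hadag in
lemma adag_mul_proj_of_le {p k : ℤ} (h : k ≤ p) : adag p * a k * adag k = adag p := by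
  refine ext_e fun A => ?_
  simp only [mul_assoc, mul_apply_eq_comp (adag p), proj_apply ha hadag, hadag _ _, apply_ite,
    map_zero]
  split_ifs <;> grind

include ha hadag in
lemma proj_mul_adag_of_lt {q k : ℤ} (h : k < q) : a k * adag k * adag q = adag q := by
  refine ext_e fun A => ?_
  simp only [mul_apply_eq_comp _ (adag q), proj_apply ha hadag, hadag _ _, apply_ite, map_zero]
  split_ifs <;> grind

include ha hadag in
lemma proj_mul_a_of_le {q k : ℤ} (h : k ≤ q) : a k * adag k * a q = a q := by
  refine ext_e fun A => ?_
  simp only [mul_apply_eq_comp _ (a q), proj_apply ha hadag, ha _ _, apply_ite, map_zero]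
  split_ifs <;> grind

include ha hadag in
lemma a_mul_proj_of_lt {p k : ℤ} (h : k < p) : a p * a k * adag k = a p := by
  refine ext_e fun A => ?_
  simp only [mul_assoc, mul_apply_eq_comp (a p), proj_apply ha hadag, ha _ _, apply_ite, map_zero]
  split_ifs <;> grind

end Operators

/-- `0` is included so that the set is closed under multiplication. -/
def forms (a adag : ℤ → (Fm →L[ℂ] Fm)) : Set (Fm →L[ℂ] Fm) :=
  {X | X = 0 ∨ IsLambdaForm a adag X ∨ IsPiForm a adag X}

section Forms
variable {a adag : ℤ → (Fm →L[ℂ] Fm)}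

lemma zero_mem_forms : (0 : Fm →L[ℂ] Fm) ∈ forms a adag := Or.inl rfl

lemma lambda_mem_forms {is js : List ℤ} (his : is.IsChain (· < ·)) (hjs : js.IsChain (· > ·)) :
    (is.map adag).prod * (js.map a).prod ∈ forms a adag :=
  Or.inr (Or.inl ⟨is, js, his, hjs, rfl⟩)

lemma pi_mem_forms {is js : List ℤ} {k : ℤ} (his : is.IsChain (· < ·))
    (hjs : js.IsChain (· > ·)) (hik : ∀ i ∈ is, i < k) (hjk : ∀ j ∈ js, j < k) :
    (is.map adag).prod * (a k * adag k) * (js.map a).prod ∈ forms a adag :=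
  Or.inr (Or.inr ⟨is, js, k, his, hjs, hik, hjk, rfl⟩)

variable (ha : AnnihilatesOn a) (hadag : CreatesOn adag)

include hadag in
lemma isChain_cons_or_adag_mul_prod_eq_zero (p : ℤ) {is : List ℤ} (his : is.IsChain (· < ·)) :
    (p :: is).IsChain (· < ·) ∨ adag p * (is.map adag).prod = 0 := by
  cases is with
  | nil => exact Or.inl (List.isChain_singleton p)
  | cons i is =>
    by_cases hpi : p < i
    · exact Or.inl (List.isChain_cons_cons.2 ⟨hpi, his⟩)
    · right
      rw [List.map_cons, List.prod_cons, ← mul_assoc, adag_mul_adag_of_le hadag (not_lt.1 hpi),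
        zero_mul]

include ha in
lemma isChain_cons_or_a_mul_prod_eq_zero (p : ℤ) {js : List ℤ} (hjs : js.IsChain (· > ·)) :
    (p :: js).IsChain (· > ·) ∨ a p * (js.map a).prod = 0 := by
  cases js with
  | nil => exact Or.inl (List.isChain_singleton p)
  | cons j js =>
    by_cases hjp : j < p
    · exact Or.inl (List.isChain_cons_cons.2 ⟨hjp, hjs⟩)
    · right
      rw [List.map_cons, List.prod_cons, ← mul_assoc, a_mul_a_of_le ha (not_lt.1 hjp), zero_mul]

include ha hadag in
lemma adag_mul_mem_forms (p : ℤ) {X : Fm →L[ℂ] Fm} (hX : X ∈ forms a adag) :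
    adag p * X ∈ forms a adag := by
  rcases hX with rfl | ⟨is, js, his, hjs, rfl⟩ | ⟨is, js, k, his, hjs, hik, hjk, rfl⟩
  · rw [mul_zero]; exact zero_mem_forms
  · rcases isChain_cons_or_adag_mul_prod_eq_zero hadag p his with h | h
    · simpa [mul_assoc] using lambda_mem_forms (a := a) h hjs
    · rw [← mul_assoc, h, zero_mul]; exact zero_mem_forms
  · rcases isChain_cons_or_adag_mul_prod_eq_zero hadag p his with h | h
    · by_cases hpk : p < k
      · have hpik : ∀ i ∈ p :: is, i < k := by
          simpa [hpk] using hik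
        simpa [mul_assoc] using pi_mem_forms h hjs hpik hjk
      · obtain rfl : is = [] := by
          refine List.eq_nil_iff_forall_not_mem.2 fun i hi => hpk ?_
          exact (List.rel_of_pairwise_cons h.pairwise hi).trans (hik i hi)
        simpa [← mul_assoc, adag_mul_proj_of_le ha hadag (not_lt.1 hpk)] using
          lambda_mem_forms (List.isChain_singleton p) hjs
    · rw [← mul_assoc, ← mul_assoc, h, zero_mul, zero_mul]; exact zero_mem_forms

include ha hadag in
lemma a_mul_lambda_mem_forms (p : ℤ) {is js : List ℤ} (his : is.IsChain (· < ·))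
    (hjs : js.IsChain (· > ·)) : a p * ((is.map adag).prod * (js.map a).prod) ∈ forms a adag := by
  rcases is with _ | ⟨i, is⟩
  · rcases isChain_cons_or_a_mul_prod_eq_zero ha p hjs with h | h
    · simpa using lambda_mem_forms (adag := adag) List.isChain_nil h
    · simpa [h] using zero_mem_forms
  rcases ne_or_eq p i with hpi | rfl
  · simpa [← mul_assoc, a_mul_adag_of_ne ha hadag hpi] using zero_mem_forms
  rcases is with _ | ⟨q, is⟩
  · rcases js with _ | ⟨j, js⟩
    · simpa [mul_assoc] using
        pi_mem_forms (is := []) (js := []) (k := p) List.isChain_nil hjs (by simp) (by simp)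
    by_cases hjp : j < p
    · have hjsp : ∀ x ∈ j :: js, x < p := List.forall_mem_cons.2
        ⟨hjp, fun x hx => (List.rel_of_pairwise_cons hjs.pairwise hx).trans hjp⟩
      simpa [mul_assoc] using pi_mem_forms List.isChain_nil hjs (by simp) hjsp
    · simpa [← mul_assoc, proj_mul_a_of_le ha hadag (not_lt.1 hjp)] using
        lambda_mem_forms (adag := adag) List.isChain_nil hjs
  · have hpq : p < q := (List.isChain_cons_cons.1 his).1
    simpa [← mul_assoc, proj_mul_adag_of_lt ha hadag hpq] using
      lambda_mem_forms his.tail hjs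

include ha hadag in
lemma a_mul_pi_mem_forms (p : ℤ) {is js : List ℤ} {k : ℤ} (his : is.IsChain (· < ·))
    (hjs : js.IsChain (· > ·)) (hik : ∀ i ∈ is, i < k) (hjk : ∀ j ∈ js, j < k) :
    a p * ((is.map adag).prod * (a k * adag k) * (js.map a).prod) ∈ forms a adag := by
  rcases is with _ | ⟨i, is⟩
  · by_cases hkp : k < p
    · have hpjs : (p :: js).IsChain (· > ·) := by
        rcases js with _ | ⟨j, js⟩
        · exact List.isChain_singleton p
        · exact List.isChain_cons_cons.2 ⟨(hjk j (by simp)).trans hkp, hjs⟩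
      simpa [← mul_assoc, a_mul_proj_of_lt ha hadag hkp] using
        lambda_mem_forms (adag := adag) List.isChain_nil hpjs
    · simpa [← mul_assoc, a_mul_a_of_le ha (not_lt.1 hkp)] using zero_mem_forms
  rcases ne_or_eq p i with hpi | rfl
  · simpa [← mul_assoc, a_mul_adag_of_ne ha hadag hpi] using zero_mem_forms
  rcases is with _ | ⟨q, is⟩
  · have hpk : p ≤ k := (hik p (by simp)).le
    simpa [← mul_assoc, proj_mul_a_of_le ha hadag hpk] using
      pi_mem_forms List.isChain_nil hjs (by simp) hjk
  · have hpq : p < q := (List.isChain_cons_cons.1 his).1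
    simpa [← mul_assoc, proj_mul_adag_of_lt ha hadag hpq] using
      pi_mem_forms his.tail hjs (fun i hi => hik i (List.mem_cons_of_mem p hi)) hjk

lemma IsPositiveLengthForm.mem_forms {X : Fm →L[ℂ] Fm} (hX : IsPositiveLengthForm a adag X) :
    X ∈ forms a adag := by
  rcases hX with ⟨is, js, his, hjs, -, rfl⟩ | hX
  · exact lambda_mem_forms his hjs
  · exact Or.inr (Or.inr hX)

include ha hadag in
lemma a_mul_mem_forms (p : ℤ) {X : Fm →L[ℂ] Fm} (hX : X ∈ forms a adag) :
    a p * X ∈ forms a adag := by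
  rcases hX with rfl | ⟨is, js, his, hjs, rfl⟩ | ⟨is, js, k, his, hjs, hik, hjk, rfl⟩
  · rw [mul_zero]; exact zero_mem_forms
  · exact a_mul_lambda_mem_forms ha hadag p his hjs
  · exact a_mul_pi_mem_forms ha hadag p his hjs hik hjk

include ha hadag in
lemma closure_generators_subset_forms :
    (Submonoid.closure (Set.range a ∪ star (Set.range a)) : Set (Fm →L[ℂ] Fm)) ⊆ forms a adag := by
  intro X hX
  induction hX using Submonoid.closure_induction_left with
  | one => simpa using lambda_mem_forms (a := a) (adag := adag) List.isChain_nil List.isChain_nil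
  | mul_left g hg Y _ hY =>
    rcases hg with ⟨p, rfl⟩ | ⟨p, hp⟩
    · exact a_mul_mem_forms ha hadag p hY
    · rw [← star_star g, ← hp, star_a ha hadag]
      exact adag_mul_mem_forms ha hadag p hY

include ha hadag in
lemma forms_subset_adjoin : forms a adag ⊆ StarAlgebra.adjoin ℂ (Set.range a) := by
  have ha_mem (l : List ℤ) : (l.map a).prod ∈ StarAlgebra.adjoin ℂ (Set.range a) :=
    list_prod_mem (by simpa using fun p _ => StarAlgebra.subset_adjoin ℂ (Set.range a) ⟨p, rfl⟩)
  have hadag_mem (l : List ℤ) : (l.map adag).prod ∈ StarAlgebra.adjoin ℂ (Set.range a) :=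
    list_prod_mem (by simpa [← star_a ha hadag] using
      fun p _ => star_mem (StarAlgebra.subset_adjoin ℂ (Set.range a) ⟨p, rfl⟩))
  rintro X (rfl | ⟨is, js, -, -, rfl⟩ | ⟨is, js, k, -, -, -, -, rfl⟩)
  · exact zero_mem _
  · exact mul_mem (hadag_mem is) (ha_mem js)
  · exact mul_mem (mul_mem (hadag_mem is) (mul_mem (ha_mem [k]) (hadag_mem [k]))) (ha_mem js)

include ha hadag in
lemma adjoin_le_span_forms :
    Subalgebra.toSubmodule (StarAlgebra.adjoin ℂ (Set.range a)).toSubalgebra ≤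
      Submodule.span ℂ (forms a adag) := by
  rw [StarAlgebra.adjoin_toSubalgebra, Algebra.adjoin_eq_span]
  exact Submodule.span_mono (closure_generators_subset_forms ha hadag)

lemma forms_subset_span_sup :
    forms a adag ⊆
      (Submodule.span ℂ {X | IsPositiveLengthForm a adag X} ⊔ ℂ ∙ (1 : Fm →L[ℂ] Fm) :
        Submodule ℂ (Fm →L[ℂ] Fm)) := by
  rintro X (rfl | ⟨is, js, his, hjs, rfl⟩ | hX)
  · exact zero_mem _
  · by_cases hne : is ++ js = []
    · obtain ⟨rfl, rfl⟩ := List.append_eq_nil_iff.1 hne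
      simpa using Submodule.mem_sup_right (Submodule.mem_span_singleton_self _)
    · exact Submodule.mem_sup_left (Submodule.subset_span (Or.inl ⟨is, js, his, hjs, hne, rfl⟩))
  · exact Submodule.mem_sup_left (Submodule.subset_span (Or.inr hX))

end Forms

section Vacuum
variable {a adag : ℤ → (Fm →L[ℂ] Fm)} (ha : AnnihilatesOn a) (hadag : CreatesOn adag)

include ha in
lemma eventually_a_apply_e_singleton_eq_zero (j : ℤ) : ∀ᶠ n in atBot, a j (e {n}) = 0 := by
  filter_upwards [eventually_lt_atBot j] with n hn
  rw [ha, if_neg (by simp [hn.ne'])]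

include hadag in
lemma eventually_adag_apply_e_singleton_eq_zero (i : ℤ) : ∀ᶠ n in atBot, adag i (e {n}) = 0 := by
  filter_upwards [eventually_le_atBot i] with n hn
  rw [hadag, if_neg (by simpa using hn)]

include ha hadag in
lemma eventually_proj_apply_e_singleton_eq_zero (k : ℤ) :
    ∀ᶠ n in atBot, (a k * adag k) (e {n}) = 0 := by
  filter_upwards [eventually_le_atBot k] with n hn
  rw [proj_apply ha hadag, if_neg (by simpa using hn)]

include ha hadag in
lemma IsPositiveLengthForm.eventually_apply_e_singleton_eq_zero {X : Fm →L[ℂ] Fm}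
    (hX : IsPositiveLengthForm a adag X) : ∀ᶠ n in atBot, X (e {n}) = 0 := by
  rcases hX with ⟨is, js, -, -, hne, rfl⟩ | ⟨is, js, k, -, -, -, -, rfl⟩
  · rcases js.eq_nil_or_concat with rfl | ⟨js, j, rfl⟩
    · obtain ⟨is, i, rfl⟩ := (List.eq_nil_or_concat is).resolve_left (by simpa using hne)
      filter_upwards [eventually_adag_apply_e_singleton_eq_zero hadag i] with n hn
      simp [mul_apply_eq_comp, hn]
    · filter_upwards [eventually_a_apply_e_singleton_eq_zero ha j] with n hn
      simp [mul_apply_eq_comp, hn]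
  · rcases js.eq_nil_or_concat with rfl | ⟨js, j, rfl⟩
    · filter_upwards [eventually_proj_apply_e_singleton_eq_zero ha hadag k] with n hn
      simp [mul_apply_eq_comp, hn]
    · filter_upwards [eventually_a_apply_e_singleton_eq_zero ha j] with n hn
      simp [mul_apply_eq_comp, hn]

include ha hadag in
lemma eventually_apply_e_singleton_eq_zero_of_mem_span {Y : Fm →L[ℂ] Fm}
    (hY : Y ∈ Submodule.span ℂ {X | IsPositiveLengthForm a adag X}) :
    ∀ᶠ n in atBot, Y (e {n}) = 0 := by
  induction hY using Submodule.span_induction with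
  | mem X hX => exact hX.eventually_apply_e_singleton_eq_zero ha hadag
  | zero => simp
  | add X Y _ _ hX hY => filter_upwards [hX, hY] with n hXn hYn; simp [hXn, hYn]
  | smul c X _ hX => filter_upwards [hX] with n hXn; simp [hXn]

include ha hadag in
lemma one_notMem_Am : (1 : Fm →L[ℂ] Fm) ∉ Am a adag := by
  intro h
  obtain ⟨Y, hY, hdist⟩ := Metric.mem_closure_iff.1 h 1 one_pos
  obtain ⟨n, hn⟩ := (eventually_apply_e_singleton_eq_zero_of_mem_span ha hadag hY).exists
  have hle : (1 : ℝ) ≤ ‖1 - Y‖ := by simpa [hn, norm_e] using (1 - Y).le_opNorm (e {n})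
  rw [dist_eq_norm] at hdist
  linarith

end Vacuum

lemma Submodule.eq_and_eq_of_add_smul_eq_add_smul {K E : Type*} [Field K] [AddCommGroup E]
    [Module K E] {p : Submodule K E} {v : E} (hv : v ∉ p) {x₁ x₂ : E} (h₁ : x₁ ∈ p)
    (h₂ : x₂ ∈ p) {c₁ c₂ : K} (h : x₁ + c₁ • v = x₂ + c₂ • v) : x₁ = x₂ ∧ c₁ = c₂ := by
  obtain rfl : c₁ = c₂ := by
    by_contra hne
    have hmem : (c₁ - c₂) • v ∈ p := by
      rw [show (c₁ - c₂) • v = x₂ - x₁ by linear_combination (norm := module) h]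
      exact sub_mem h₂ h₁
    exact hv ((p.smul_mem_iff (sub_ne_zero.2 hne)).1 hmem)
  exact ⟨add_right_cancel h, rfl⟩

lemma Rm_eq_topologicalClosure_sup_span_one {a adag : ℤ → (Fm →L[ℂ] Fm)}
    (ha : AnnihilatesOn a) (hadag : CreatesOn adag) :
    Rm a = ((Submodule.span ℂ {X | IsPositiveLengthForm a adag X}).topologicalClosure ⊔
      ℂ ∙ (1 : Fm →L[ℂ] Fm) : Submodule ℂ (Fm →L[ℂ] Fm)) := by
  set adjoin := StarAlgebra.adjoin ℂ (Set.range a)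
  set span := Submodule.span ℂ {X | IsPositiveLengthForm a adag X}
  have hclosed : IsClosed ((span.topologicalClosure ⊔ ℂ ∙ (1 : Fm →L[ℂ] Fm) :
      Submodule ℂ (Fm →L[ℂ] Fm)) : Set (Fm →L[ℂ] Fm)) :=
    Submodule.isClosed_sup_finiteDimensional _ _ span.isClosed_topologicalClosure
  have hspan : span ≤ Subalgebra.toSubmodule adjoin.toSubalgebra :=
    Submodule.span_le.2 fun X hX => forms_subset_adjoin ha hadag hX.mem_forms
  have hforms := Submodule.span_le.2 (forms_subset_span_sup (a := a) (adag := adag))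
  apply subset_antisymm
  · refine closure_minimal (fun X hX => ?_) hclosed
    exact sup_le_sup_right span.le_topologicalClosure _ (hforms (adjoin_le_span_forms ha hadag hX))
  · refine sup_le (Submodule.topologicalClosure_mono hspan) ?_
    exact (Submodule.span_singleton_le_iff_mem _ _).2
      ((Subalgebra.toSubmodule adjoin.toSubalgebra).le_topologicalClosure (one_mem adjoin))

/-- Corollary 4.8 (Corollary `noid2`): `ℜ_m = 𝔄_m + ℂI`: every element of `ℜ_m` can be
written (uniquely) as `X + cI` with `X ∈ 𝔄_m` and `c ∈ ℂ`, and conversely every such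
sum belongs to `ℜ_m`. -/
theorem Rm_eq_Am_add_scalars
    (a adag : ℤ → (Fm →L[ℂ] Fm))
    (ha : AnnihilatesOn a) (hadag : CreatesOn adag) :
    (∀ Z : Fm →L[ℂ] Fm, Z ∈ Rm a ↔
      ∃ X ∈ Am a adag, ∃ c : ℂ, Z = X + c • (1 : Fm →L[ℂ] Fm)) ∧
    (∀ X₁ ∈ Am a adag, ∀ X₂ ∈ Am a adag, ∀ c₁ c₂ : ℂ,
      X₁ + c₁ • (1 : Fm →L[ℂ] Fm) = X₂ + c₂ • (1 : Fm →L[ℂ] Fm) →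
      X₁ = X₂ ∧ c₁ = c₂) := by
  refine ⟨fun Z => ?_, fun X₁ h₁ X₂ h₂ c₁ c₂ h =>
    Submodule.eq_and_eq_of_add_smul_eq_add_smul
      (p := (Submodule.span ℂ {X | IsPositiveLengthForm a adag X}).topologicalClosure)
      (one_notMem_Am ha hadag) h₁ h₂ h⟩
  rw [Rm_eq_topologicalClosure_sup_span_one ha hadag, SetLike.mem_coe, Submodule.mem_sup]
  simp only [Submodule.mem_span_singleton]
  constructor
  · rintro ⟨X, hX, _, ⟨c, rfl⟩, rfl⟩
    exact ⟨X, hX, c, rfl⟩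
  · rintro ⟨X, hX, c, rfl⟩
    exact ⟨X, hX, _, ⟨c, rfl⟩, rfl⟩

end
end
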